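/- The backward (incoming) transition dual update monotonically increases the dual function: let v ∈ V_det with In(v) and Out(v) nonempty and let λ ∈ Λ. Let x* be a minimizer of ⟨θ^λ_v, ·⟩ over {x ∈ X_v : x_det = 1}, let y* be a minimizer of ⟨θ^λ_v, ·⟩ over {x ∈ X_v : x_det = 1, x_in ≠ x*_in, x_out ≠ x*_out}, and set B_in = min{0, ½[⟨θ^λ_v, x*⟩ + ⟨θ^λ_v, (1, y*_in, x*_out)⟩]} (the state (1, y*_in, x*_out) lies in X_v). Define the update μ ∈ Λ by: μ(e) = − min{⟨θ^λ_v, x⟩ : x ∈ X_v, x_in(e) = 1} + B_in for every move edge e ∈ In(v); μ_v(e) = − min{⟨θ^λ_v, x⟩ : x ∈ X_v, x_in(e) = 1} + B_in for every division edge e ∈ In(v) in which v appears as a target; all other components of μ are zero. Then D(λ) ≤ D(λ + μ). -/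

import Mathlib

open Finset

/-- Transition edges: a move `u→v` is `Sum.inl (u, v)`, a division `u→(v, w)` is
`Sum.inr (u, v, w)`. -/
abbrev Edge (Vdet : Type*) := (Vdet × Vdet) ⊕ (Vdet × Vdet × Vdet)

/-- A detection state `(x_det, x_in, x_out)`: the activation flag is a `Bool`, and each
`{0,1}`-vector is identified with the finite set of coordinates equal to `1`. -/
abbrev DetS (Vdet : Type*) := Bool × Finset (Edge Vdet) × Finset (Edge Vdet)

/-- A tracking decomposition: detection nodes `Vdet`, conflict nodes `Vconf`,
move edges (with distinct endpoints), division edges (with pairwise distinct nodes)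
and conflict edges. -/
structure Tracking (Vdet Vconf : Type*) [Fintype Vdet] [DecidableEq Vdet]
    [Fintype Vconf] [DecidableEq Vconf] where
  Emove : Finset (Vdet × Vdet)
  Ediv : Finset (Vdet × Vdet × Vdet)
  Econf : Finset (Vdet × Vconf)
  move_ne : ∀ e ∈ Emove, e.1 ≠ e.2
  div_ne : ∀ e ∈ Ediv, e.1 ≠ e.2.1 ∧ e.1 ≠ e.2.2 ∧ e.2.1 ≠ e.2.2

/-- A cost vector `θ`. -/
structure Cost (Vdet Vconf : Type*) where
  det : Vdet → ℝ
  inn : Vdet → Edge Vdet → ℝ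
  out : Vdet → Edge Vdet → ℝ
  conf : Vconf → Vdet → ℝ

/-- A reparametrization `λ ∈ Λ`: one real per move edge, a pair of reals
`(λ_v(e), λ_w(e))` per division edge `e = u→(v,w)`, and one real per conflict edge. -/
abbrev Repa (Vdet Vconf : Type*) : Type _ :=
  ((Vdet × Vdet) → ℝ) × ((Vdet × Vdet × Vdet) → ℝ × ℝ) × ((Vdet × Vconf) → ℝ)

variable {Vdet Vconf : Type*} [Fintype Vdet] [DecidableEq Vdet]
  [Fintype Vconf] [DecidableEq Vconf]

namespace Tracking

variable (T : Tracking Vdet Vconf)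

/-- The set `In(u)` of incoming transition edges of a detection node `u`. -/
def In (u : Vdet) : Finset (Edge Vdet) :=
  (T.Emove.filter (fun m => m.2 = u)).image Sum.inl ∪
    (T.Ediv.filter (fun d => d.2.1 = u ∨ d.2.2 = u)).image Sum.inr

/-- The set `Out(u)` of outgoing transition edges of a detection node `u`. -/
def Out (u : Vdet) : Finset (Edge Vdet) :=
  (T.Emove.filter (fun m => m.1 = u)).image Sum.inl ∪
    (T.Ediv.filter (fun d => d.1 = u)).image Sum.inr

/-- The set `conf(u)` of conflict edges incident to a detection node `u`. -/
def confSet (u : Vdet) : Finset (Vdet × Vconf) := T.Econf.filter (fun e => e.1 = u)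

/-- The detection nodes `u ∈ c` of a conflict node `c`. -/
def membersOf (c : Vconf) : Finset Vdet := Finset.univ.filter (fun v => (v, c) ∈ T.Econf)

/-- The state space `X_u` of a detection node. -/
def XDet (u : Vdet) : Finset (DetS Vdet) :=
  Finset.univ.filter (fun s =>
    s.2.1 ⊆ T.In u ∧ s.2.2 ⊆ T.Out u ∧
    s.2.1.card ≤ (if s.1 then 1 else 0) ∧ s.2.2.card ≤ (if s.1 then 1 else 0))

lemma zero_mem_XDet (u : Vdet) : ((false, ∅, ∅) : DetS Vdet) ∈ T.XDet u := by
  simp [XDet]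

lemma XDet_nonempty (u : Vdet) : (T.XDet u).Nonempty := ⟨_, T.zero_mem_XDet u⟩

/-- The state space `X_c` of a conflict node. -/
def XConf (c : Vconf) : Finset (Finset Vdet) :=
  Finset.univ.filter (fun s => (∀ v ∈ s, (v, c) ∈ T.Econf) ∧ s.card ≤ 1)

lemma empty_mem_XConf (c : Vconf) : (∅ : Finset Vdet) ∈ T.XConf c := by
  simp [XConf]

lemma XConf_nonempty (c : Vconf) : (T.XConf c).Nonempty := ⟨_, T.empty_mem_XConf c⟩

end Tracking

/-- The cost `⟨θ_u, x_u⟩` of a detection state. -/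
def detCost (θ : Cost Vdet Vconf) (u : Vdet) (s : DetS Vdet) : ℝ :=
  (if s.1 then θ.det u else 0) + ∑ e ∈ s.2.1, θ.inn u e + ∑ e ∈ s.2.2, θ.out u e

/-- The cost `⟨θ_c, x_c⟩` of a conflict state. -/
def confCost (θ : Cost Vdet Vconf) (c : Vconf) (s : Finset Vdet) : ℝ :=
  ∑ v ∈ s, θ.conf c v

/-- The energy `E(θ, x)`. -/
def energy (θ : Cost Vdet Vconf) (x : Vdet → DetS Vdet) (y : Vconf → Finset Vdet) : ℝ :=
  ∑ u, detCost θ u (x u) + ∑ c, confCost θ c (y c)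

namespace Tracking

variable (T : Tracking Vdet Vconf)

/-- The coupling constraints relating the states of the nodes. -/
def Coupled (x : Vdet → DetS Vdet) (y : Vconf → Finset Vdet) : Prop :=
  (∀ m ∈ T.Emove, (Sum.inl m ∈ (x m.1).2.2 ↔ Sum.inl m ∈ (x m.2).2.1)) ∧
  (∀ d ∈ T.Ediv, (Sum.inr d ∈ (x d.1).2.2 ↔ Sum.inr d ∈ (x d.2.1).2.1) ∧
      (Sum.inr d ∈ (x d.1).2.2 ↔ Sum.inr d ∈ (x d.2.2).2.1)) ∧
  (∀ e ∈ T.Econf, ((x e.1).1 = true ↔ e.1 ∈ y e.2))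

/-- A feasible assignment `x ∈ X`: valid local states satisfying all coupling constraints. -/
def Feasible (x : Vdet → DetS Vdet) (y : Vconf → Finset Vdet) : Prop :=
  (∀ u, x u ∈ T.XDet u) ∧ (∀ c, y c ∈ T.XConf c) ∧ T.Coupled x y

/-- The reparametrized costs `θ^λ`. -/
def repaCost (θ : Cost Vdet Vconf) (l : Repa Vdet Vconf) : Cost Vdet Vconf where
  det u := θ.det u - ∑ e ∈ T.confSet u, l.2.2 e
  inn u e := θ.inn u e +
    (match e with
      | Sum.inl m => l.1 m
      | Sum.inr d =>
          (if d.2.1 = u then (l.2.1 d).1 else 0) + (if d.2.2 = u then (l.2.1 d).2 else 0))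
  out u e := θ.out u e -
    (match e with
      | Sum.inl m => l.1 m
      | Sum.inr d => (l.2.1 d).1 + (l.2.1 d).2)
  conf c u := θ.conf c u + l.2.2 (u, c)

/-- The dual function `D(λ)`. -/
def D (θ : Cost Vdet Vconf) (l : Repa Vdet Vconf) : ℝ :=
  ∑ u, (T.XDet u).inf' (T.XDet_nonempty u) (detCost (T.repaCost θ l) u) +
    ∑ c, (T.XConf c).inf' (T.XConf_nonempty c) (confCost (T.repaCost θ l) c)

/-- The states of `X_u` with active detection variable, `{x ∈ X_u : x_det = 1}`. -/
def XDet1 (u : Vdet) : Finset (DetS Vdet) := (T.XDet u).filter (fun s => s.1 = true)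

lemma one_mem_XDet1 (u : Vdet) : ((true, ∅, ∅) : DetS Vdet) ∈ T.XDet1 u := by
  simp [XDet1, XDet]

lemma XDet1_nonempty (u : Vdet) : (T.XDet1 u).Nonempty := ⟨_, T.one_mem_XDet1 u⟩

/-- The states of `X_u` with a given active outgoing edge, `{x ∈ X_u : x_out(e) = 1}`. -/
def XDetOut (u : Vdet) (e : Edge Vdet) : Finset (DetS Vdet) :=
  (T.XDet u).filter (fun s => e ∈ s.2.2)

lemma XDetOut_nonempty (u : Vdet) (e : Edge Vdet) (he : e ∈ T.Out u) :
    (T.XDetOut u e).Nonempty :=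
  ⟨(true, ∅, {e}), by simp [XDetOut, XDet, Finset.singleton_subset_iff, he]⟩

/-- The states of `X_u` with a given active incoming edge, `{x ∈ X_u : x_in(e) = 1}`. -/
def XDetIn (u : Vdet) (e : Edge Vdet) : Finset (DetS Vdet) :=
  (T.XDet u).filter (fun s => e ∈ s.2.1)

lemma XDetIn_nonempty (u : Vdet) (e : Edge Vdet) (he : e ∈ T.In u) :
    (T.XDetIn u e).Nonempty :=
  ⟨(true, {e}, ∅), by simp [XDetIn, XDet, Finset.singleton_subset_iff, he]⟩

/-- `min{⟨θ_u, x⟩ : x ∈ X_u, x_out(e) = 1}` (by convention `0` if `e ∉ Out(u)`). -/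
def minOutOn (θ : Cost Vdet Vconf) (u : Vdet) (e : Edge Vdet) : ℝ :=
  if h : e ∈ T.Out u then (T.XDetOut u e).inf' (T.XDetOut_nonempty u e h) (detCost θ u) else 0

/-- `min{⟨θ_u, x⟩ : x ∈ X_u, x_in(e) = 1}` (by convention `0` if `e ∉ In(u)`). -/
def minInOn (θ : Cost Vdet Vconf) (u : Vdet) (e : Edge Vdet) : ℝ :=
  if h : e ∈ T.In u then (T.XDetIn u e).inf' (T.XDetIn_nonempty u e h) (detCost θ u) else 0

end Tracking

/-!
Write `m(e)` for the min-marginal `min{⟨θ^λ_v, x⟩ : x_in(e) = 1}`. The update adds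
`B_in - m(e)` to `x_in(e)` at `v` and subtracts it from `x_out(e)` at the source of `e`, so the
cheapest state of `v` with `x_in(e) = 1` afterwards costs exactly `B_in`.

An exchange argument (the cost of an active state is additive in its incoming and outgoing
parts) shows that `z = (1, y*_in, x*_out)` is the cheapest active state whose incoming part
differs from `x*_in`. As `B_in ≤ ⟨θ^λ_v, z⟩`, every edge `e ∉ x*_in` has `m(e) ≥ B_in`, so its
source can only gain. If `x*_in = ∅` no node loses. If `x*_in = {e*}`, every state of `v` costs
at least `B_in` after the update, so the minimum at `v` rises by at least
`max 0 (B_in - m(e*))`, which is all that the source of `e*` can lose.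
-/

theorem Finset.eq_empty_or_eq_singleton_of_card_le_one {α : Type*} {s : Finset α}
    (h : s.card ≤ 1) : s = ∅ ∨ ∃ a, s = {a} := by
  rcases Nat.le_one_iff_eq_zero_or_eq_one.mp h with h | h
  · exact Or.inl (card_eq_zero.mp h)
  · exact Or.inr (card_eq_one.mp h)

theorem Finset.sum_le_sum_of_transfer {ι M : Type*} [Fintype ι] [DecidableEq ι]
    [AddCommGroup M] [PartialOrder M] [IsOrderedAddMonoid M] {a b : ι → M} {i j : ι}
    (hij : i ≠ j) (τ : M) (hi : a i + τ ≤ b i) (hj : a j - τ ≤ b j)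
    (hk : ∀ k, k ≠ i → k ≠ j → a k ≤ b k) : ∑ k, a k ≤ ∑ k, b k := by
  have hj_mem : j ∈ univ.erase i := mem_erase.mpr ⟨hij.symm, mem_univ j⟩
  rw [← add_sum_erase _ a (mem_univ i), ← add_sum_erase _ a hj_mem,
    ← add_sum_erase _ b (mem_univ i), ← add_sum_erase _ b hj_mem]
  set rest := (univ.erase i).erase j
  have hrest : ∑ k ∈ rest, a k ≤ ∑ k ∈ rest, b k := sum_le_sum fun k hk' => by
    obtain ⟨hkj, hk'⟩ := mem_erase.mp hk'
    exact hk k (ne_of_mem_erase hk') hkj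
  calc a i + (a j + ∑ k ∈ rest, a k) = (a i + τ) + ((a j - τ) + ∑ k ∈ rest, a k) := by abel
    _ ≤ b i + (b j + ∑ k ∈ rest, b k) := by gcongr

def Edge.src {V : Type*} : Edge V → V := Sum.elim Prod.fst Prod.fst

theorem detCost_add_detCost_swap {V C : Type*} (θ : Cost V C) (u : V) {s t : DetS V}
    (hs : s.1 = true) (ht : t.1 = true) :
    detCost θ u s + detCost θ u t =
      detCost θ u (true, s.2.1, t.2.2) + detCost θ u (true, t.2.1, s.2.2) := by
  simp only [detCost, hs, ht, if_true]
  ring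

namespace Tracking

variable (T : Tracking Vdet Vconf)

@[simp]
theorem inl_mem_In {v : Vdet} {m : Vdet × Vdet} :
    Sum.inl m ∈ T.In v ↔ m ∈ T.Emove ∧ m.2 = v := by
  simp [In]

@[simp]
theorem inr_mem_In {v : Vdet} {d : Vdet × Vdet × Vdet} :
    Sum.inr d ∈ T.In v ↔ d ∈ T.Ediv ∧ (d.2.1 = v ∨ d.2.2 = v) := by
  simp [In]

theorem src_eq_of_mem_Out {u : Vdet} {e : Edge Vdet} (he : e ∈ T.Out u) : e.src = u := by
  rcases e with m | d <;> simp_all [Out, Edge.src]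

theorem src_ne_of_mem_In {v : Vdet} {e : Edge Vdet} (he : e ∈ T.In v) : e.src ≠ v := by
  rcases e with m | d
  · obtain ⟨hm, rfl⟩ := T.inl_mem_In.mp he
    exact T.move_ne m hm
  · obtain ⟨hd, rfl | rfl⟩ := T.inr_mem_In.mp he
    exacts [(T.div_ne d hd).1, (T.div_ne d hd).2.1]

theorem not_mem_Out_of_mem_In {v : Vdet} {e : Edge Vdet} (he : e ∈ T.In v) : e ∉ T.Out v :=
  fun ho => T.src_ne_of_mem_In he (T.src_eq_of_mem_Out ho)

theorem mem_XDet {u : Vdet} {s : DetS Vdet} : s ∈ T.XDet u ↔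
    s.2.1 ⊆ T.In u ∧ s.2.2 ⊆ T.Out u ∧
      s.2.1.card ≤ (if s.1 then 1 else 0) ∧ s.2.2.card ≤ (if s.1 then 1 else 0) := by
  simp [XDet]

theorem card_in_le_one {u : Vdet} {s : DetS Vdet} (hs : s ∈ T.XDet u) : s.2.1.card ≤ 1 :=
  (T.mem_XDet.mp hs).2.2.1.trans (by split_ifs <;> simp)

theorem card_out_le_one {u : Vdet} {s : DetS Vdet} (hs : s ∈ T.XDet u) : s.2.2.card ≤ 1 :=
  (T.mem_XDet.mp hs).2.2.2.trans (by split_ifs <;> simp)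

theorem eq_inactive_of_mem_XDet {u : Vdet} {s : DetS Vdet} (hs : s ∈ T.XDet u)
    (h : s.1 = false) : s = (false, ∅, ∅) := by
  obtain ⟨-, -, hin, hout⟩ := T.mem_XDet.mp hs
  simp only [h, Bool.false_eq_true, if_false, Nat.le_zero, card_eq_zero] at hin hout
  ext <;> simp [h, hin, hout]

theorem mem_XDet1_of_in_nonempty {u : Vdet} {s : DetS Vdet} (hs : s ∈ T.XDet u)
    (h : s.2.1.Nonempty) : s ∈ T.XDet1 u := by
  refine mem_filter.mpr ⟨hs, ?_⟩
  by_contra hf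
  simp [T.eq_inactive_of_mem_XDet hs (by simpa using hf)] at h

theorem mk_mem_XDet1 {u : Vdet} {s t : DetS Vdet} (hs : s ∈ T.XDet1 u) (ht : t ∈ T.XDet1 u) :
    ((true, s.2.1, t.2.2) : DetS Vdet) ∈ T.XDet1 u := by
  have hs' := (mem_filter.mp hs).1
  have ht' := (mem_filter.mp ht).1
  refine mem_filter.mpr ⟨T.mem_XDet.mpr ⟨(T.mem_XDet.mp hs').1, (T.mem_XDet.mp ht').2.1,
    by simpa using T.card_in_le_one hs', by simpa using T.card_out_le_one ht'⟩, rfl⟩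

theorem repaCost_add (θ : Cost Vdet Vconf) (l μ : Repa Vdet Vconf) :
    T.repaCost θ (l + μ) = T.repaCost (T.repaCost θ l) μ := by
  simp only [repaCost, Cost.mk.injEq]
  refine ⟨?_, ?_, ?_, ?_⟩ <;> funext u
  · simp only [Prod.snd_add, Pi.add_apply, sum_add_distrib]
    ring
  · funext e
    rcases e with m | d <;> simp only [Prod.fst_add, Prod.snd_add, Pi.add_apply]
    · ring
    · split_ifs <;> ring
  · funext e
    rcases e with m | d <;> simp only [Prod.fst_add, Prod.snd_add, Pi.add_apply] <;> ring
  · funext c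
    simp only [Prod.snd_add, Pi.add_apply]
    ring

def inUpdate (v : Vdet) (g : Edge Vdet → ℝ) : Repa Vdet Vconf :=
  (fun m => if Sum.inl m ∈ T.In v then g (Sum.inl m) else 0,
   fun d => (if Sum.inr d ∈ T.In v ∧ d.2.1 = v then g (Sum.inr d) else 0,
     if Sum.inr d ∈ T.In v ∧ d.2.2 = v then g (Sum.inr d) else 0),
   0)

def detMin (θ : Cost Vdet Vconf) (u : Vdet) : ℝ :=
  (T.XDet u).inf' (T.XDet_nonempty u) (detCost θ u)

variable {T} (θ : Cost Vdet Vconf) {u v : Vdet} {g : Edge Vdet → ℝ}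

theorem repaCost_inUpdate_inn {e : Edge Vdet} (he : e ∈ T.In u) :
    (T.repaCost θ (T.inUpdate v g)).inn u e = θ.inn u e + if u = v then g e else 0 := by
  rcases e with m | d
  · obtain ⟨hm, rfl⟩ := T.inl_mem_In.mp he
    by_cases huv : m.2 = v <;> simp [repaCost, inUpdate, hm, huv]
  · obtain ⟨hd, hu⟩ := T.inr_mem_In.mp he
    simp only [repaCost, inUpdate, inr_mem_In, add_right_inj]
    split_ifs <;> grind [T.div_ne d]

theorem repaCost_inUpdate_out (e : Edge Vdet) :
    (T.repaCost θ (T.inUpdate v g)).out u e = θ.out u e - if e ∈ T.In v then g e else 0 := by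
  rcases e with m | d
  · simp [repaCost, inUpdate]
  · simp only [repaCost, inUpdate, inr_mem_In, sub_right_inj]
    split_ifs <;> grind [T.div_ne d]

theorem detCost_repaCost_inUpdate {s : DetS Vdet} (hs : s.2.1 ⊆ T.In u) :
    detCost (T.repaCost θ (T.inUpdate v g)) u s = detCost θ u s
      + ∑ e ∈ s.2.1, (if u = v then g e else 0)
      - ∑ e ∈ s.2.2, (if e ∈ T.In v then g e else 0) := by
  have hdet : (T.repaCost θ (T.inUpdate v g)).det u = θ.det u := by
    simp [repaCost, inUpdate]
  rw [detCost, detCost, hdet, sum_congr rfl fun e he => repaCost_inUpdate_inn θ (hs he),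
    sum_congr rfl fun e _ => repaCost_inUpdate_out θ e, sum_add_distrib, sum_sub_distrib]
  ring

theorem detCost_repaCost_inUpdate_self {s : DetS Vdet} (hs : s ∈ T.XDet v) :
    detCost (T.repaCost θ (T.inUpdate v g)) v s = detCost θ v s + ∑ e ∈ s.2.1, g e := by
  obtain ⟨hin, hout, -, -⟩ := T.mem_XDet.mp hs
  rw [detCost_repaCost_inUpdate θ hin,
    sum_eq_zero fun e he => if_neg (T.not_mem_Out_of_mem_In · (hout he))]
  simp

theorem detCost_repaCost_inUpdate_of_ne (huv : u ≠ v) {s : DetS Vdet} (hs : s ∈ T.XDet u) :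
    detCost (T.repaCost θ (T.inUpdate v g)) u s =
      detCost θ u s - ∑ e ∈ s.2.2, (if e ∈ T.In v then g e else 0) := by
  rw [detCost_repaCost_inUpdate θ (T.mem_XDet.mp hs).1]
  simp [huv]

theorem detMin_le {s : DetS Vdet} (hs : s ∈ T.XDet u) : T.detMin θ u ≤ detCost θ u s :=
  inf'_le _ hs

theorem le_detMin {a : ℝ} (h : ∀ s ∈ T.XDet u, a ≤ detCost θ u s) : a ≤ T.detMin θ u :=
  le_inf' _ _ h

theorem detMin_le_min_zero_avg {s t : DetS Vdet} (hs : s ∈ T.XDet u) (ht : t ∈ T.XDet u) :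
    T.detMin θ u ≤ min 0 ((detCost θ u s + detCost θ u t) / 2) := by
  have h0 : T.detMin θ u ≤ 0 := by simpa [detCost] using detMin_le θ (T.zero_mem_XDet u)
  have hs' := detMin_le θ hs
  have ht' := detMin_le θ ht
  exact le_min h0 (by linarith)

theorem minInOn_le {e : Edge Vdet} (he : e ∈ T.In u) {s : DetS Vdet} (hs : s ∈ T.XDet u)
    (hes : e ∈ s.2.1) : T.minInOn θ u e ≤ detCost θ u s := by
  rw [minInOn, dif_pos he]
  exact inf'_le _ (mem_filter.mpr ⟨hs, hes⟩)

theorem detMin_le_minInOn {e : Edge Vdet} (he : e ∈ T.In u) :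
    T.detMin θ u ≤ T.minInOn θ u e := by
  rw [minInOn, dif_pos he]
  exact inf'_mono _ (filter_subset _ _) _

theorem D_le_D_add_of_sum_detMin_le {l μ : Repa Vdet Vconf} (hμ : μ.2.2 = 0)
    (h : ∑ u, T.detMin (T.repaCost θ l) u ≤ ∑ u, T.detMin (T.repaCost (T.repaCost θ l) μ) u) :
    T.D θ l ≤ T.D θ (l + μ) := by
  have hconf : ∀ c, confCost (T.repaCost (T.repaCost θ l) μ) c = confCost (T.repaCost θ l) c :=
    fun c => funext fun s => by simp [confCost, repaCost, hμ]
  simp only [D, repaCost_add, hconf]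
  exact add_le_add h le_rfl

theorem le_detCost_repaCost_inUpdate_of_in_nonempty {B : ℝ} {s : DetS Vdet} (hs : s ∈ T.XDet v)
    (hne : s.2.1.Nonempty) :
    B ≤ detCost (T.repaCost θ (T.inUpdate v fun e => -T.minInOn θ v e + B)) v s := by
  obtain ⟨e, he⟩ := card_eq_one.mp (le_antisymm (T.card_in_le_one hs) hne.card_pos)
  have hes : e ∈ s.2.1 := he ▸ mem_singleton_self e
  have hmin := minInOn_le θ ((T.mem_XDet.mp hs).1 hes) hs hes
  rw [detCost_repaCost_inUpdate_self θ hs, he, sum_singleton]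
  linarith

theorem detMin_le_detMin_repaCost_inUpdate_self {B : ℝ} (hB : T.detMin θ v ≤ B) :
    T.detMin θ v ≤ T.detMin (T.repaCost θ (T.inUpdate v fun e => -T.minInOn θ v e + B)) v :=
  le_detMin _ fun s hs => by
    rcases s.2.1.eq_empty_or_nonempty with h0 | hne
    · rw [detCost_repaCost_inUpdate_self θ hs, h0, sum_empty, add_zero]
      exact detMin_le θ hs
    · exact hB.trans (le_detCost_repaCost_inUpdate_of_in_nonempty θ hs hne)

theorem le_detMin_repaCost_inUpdate_self {B : ℝ}
    (hB : ∀ s ∈ T.XDet v, s.2.1 = ∅ → B ≤ detCost θ v s) :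
    B ≤ T.detMin (T.repaCost θ (T.inUpdate v fun e => -T.minInOn θ v e + B)) v :=
  le_detMin _ fun s hs => by
    rcases s.2.1.eq_empty_or_nonempty with h0 | hne
    · rw [detCost_repaCost_inUpdate_self θ hs, h0, sum_empty, add_zero]
      exact hB s hs h0
    · exact le_detCost_repaCost_inUpdate_of_in_nonempty θ hs hne

theorem detMin_sub_le_detMin_repaCost_inUpdate_of_ne (huv : u ≠ v) {τ : ℝ} (hτ : 0 ≤ τ)
    (hg : ∀ e ∈ T.Out u, e ∈ T.In v → g e ≤ τ) :
    T.detMin θ u - τ ≤ T.detMin (T.repaCost θ (T.inUpdate v g)) u :=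
  le_detMin _ fun s hs => by
    have hsum : ∑ e ∈ s.2.2, (if e ∈ T.In v then g e else 0) ≤ τ :=
      calc ∑ e ∈ s.2.2, (if e ∈ T.In v then g e else 0)
          ≤ s.2.2.card • τ := sum_le_card_nsmul _ _ _ fun e he => by
            split_ifs with hev
            exacts [hg e ((T.mem_XDet.mp hs).2.1 he) hev, hτ]
        _ ≤ 1 • τ := nsmul_le_nsmul_left hτ (T.card_out_le_one hs)
        _ = τ := one_nsmul τ
    rw [detCost_repaCost_inUpdate_of_ne θ huv hs]
    linarith [detMin_le θ hs]

variable (T) in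
structure IsMinimizerPair (v : Vdet) (xs ys : DetS Vdet) : Prop where
  xs_mem : xs ∈ T.XDet1 v
  xs_min : ∀ s ∈ T.XDet1 v, detCost θ v xs ≤ detCost θ v s
  ys_mem : ys ∈ T.XDet1 v
  ys_out_ne : ys.2.2 ≠ xs.2.2
  ys_min : ∀ s ∈ T.XDet1 v, s.2.1 ≠ xs.2.1 → s.2.2 ≠ xs.2.2 → detCost θ v ys ≤ detCost θ v s

namespace IsMinimizerPair

variable {θ} {xs ys : DetS Vdet} {B : ℝ}

theorem swap_le (h : T.IsMinimizerPair θ v xs ys) {s : DetS Vdet} (hs : s ∈ T.XDet1 v)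
    (hs_in : s.2.1 ≠ xs.2.1) : detCost θ v (true, ys.2.1, xs.2.2) ≤ detCost θ v s := by
  have hxs1 := (mem_filter.mp h.xs_mem).2
  have hys1 := (mem_filter.mp h.ys_mem).2
  by_cases hout : s.2.2 = xs.2.2
  · have hys := h.ys_min _ (T.mk_mem_XDet1 hs h.ys_mem) hs_in h.ys_out_ne
    have hswap := detCost_add_detCost_swap θ v hys1 (mem_filter.mp hs).2
    rw [hout] at hswap
    linarith
  · have hys := h.ys_min s hs hs_in hout
    have hxs := h.xs_min _ (T.mk_mem_XDet1 h.xs_mem h.ys_mem)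
    have hswap := detCost_add_detCost_swap θ v hys1 hxs1
    linarith

theorem le_detCost_of_in_ne (h : T.IsMinimizerPair θ v xs ys)
    (hB : B ≤ (detCost θ v xs + detCost θ v (true, ys.2.1, xs.2.2)) / 2) {s : DetS Vdet}
    (hs : s ∈ T.XDet1 v) (hs_in : s.2.1 ≠ xs.2.1) : B ≤ detCost θ v s := by
  have hxz := h.xs_min _ (T.mk_mem_XDet1 h.ys_mem h.xs_mem)
  have hzs := h.swap_le hs hs_in
  linarith

theorem le_minInOn (h : T.IsMinimizerPair θ v xs ys)
    (hB : B ≤ (detCost θ v xs + detCost θ v (true, ys.2.1, xs.2.2)) / 2) {e : Edge Vdet}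
    (he : e ∈ T.In v) (hexs : e ∉ xs.2.1) : B ≤ T.minInOn θ v e := by
  rw [minInOn, dif_pos he]
  refine le_inf' _ _ fun s hs => ?_
  obtain ⟨hsX, hes⟩ := mem_filter.mp hs
  exact h.le_detCost_of_in_ne hB (T.mem_XDet1_of_in_nonempty hsX ⟨e, hes⟩)
    fun hin => hexs (hin ▸ hes)

theorem le_detCost_of_in_empty (h : T.IsMinimizerPair θ v xs ys)
    (hB : B ≤ min 0 ((detCost θ v xs + detCost θ v (true, ys.2.1, xs.2.2)) / 2))
    (hxs_in : xs.2.1 ≠ ∅) {s : DetS Vdet} (hs : s ∈ T.XDet v) (hs_in : s.2.1 = ∅) :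
    B ≤ detCost θ v s := by
  cases hs1 : s.1
  · rw [T.eq_inactive_of_mem_XDet hs hs1]
    simpa [detCost] using hB.trans (min_le_left _ _)
  · exact h.le_detCost_of_in_ne (hB.trans (min_le_right _ _))
      (mem_filter.mpr ⟨hs, hs1⟩) (hs_in ▸ hxs_in.symm)

theorem detMin_add_le_detMin_repaCost_inUpdate_self (h : T.IsMinimizerPair θ v xs ys)
    (hB : B = min 0 ((detCost θ v xs + detCost θ v (true, ys.2.1, xs.2.2)) / 2))
    {e : Edge Vdet} (hxs_in : xs.2.1 = {e}) :
    T.detMin θ v + max 0 (-T.minInOn θ v e + B) ≤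
      T.detMin (T.repaCost θ (T.inUpdate v fun e => -T.minInOn θ v e + B)) v := by
  have hxs := (mem_filter.mp h.xs_mem).1
  have hBv : T.detMin θ v ≤ B :=
    hB ▸ detMin_le_min_zero_avg θ hxs (mem_filter.mp (T.mk_mem_XDet1 h.ys_mem h.xs_mem)).1
  have hBle := le_detMin_repaCost_inUpdate_self θ
    fun s hs hs_in => h.le_detCost_of_in_empty hB.le (by simp [hxs_in]) hs hs_in
  have hmin := detMin_le_minInOn θ ((T.mem_XDet.mp hxs).1 (hxs_in ▸ mem_singleton_self e))
  rcases max_cases 0 (-T.minInOn θ v e + B) with ⟨hmax, -⟩ | ⟨hmax, -⟩ <;> rw [hmax] <;> linarith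

theorem sum_detMin_le (h : T.IsMinimizerPair θ v xs ys)
    (hB : B = min 0 ((detCost θ v xs + detCost θ v (true, ys.2.1, xs.2.2)) / 2)) :
    ∑ u, T.detMin θ u ≤
      ∑ u, T.detMin (T.repaCost θ (T.inUpdate v fun e => -T.minInOn θ v e + B)) u := by
  have hxs := (mem_filter.mp h.xs_mem).1
  have hg : ∀ e ∈ T.In v, e ∉ xs.2.1 → -T.minInOn θ v e + B ≤ 0 := fun e he hexs => by
    linarith [h.le_minInOn (hB.le.trans (min_le_right _ _)) he hexs]
  rcases eq_empty_or_eq_singleton_of_card_le_one (T.card_in_le_one hxs) with hxs_in | ⟨e, hxs_in⟩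
  · refine sum_le_sum fun u _ => ?_
    by_cases huv : u = v
    · subst huv
      exact detMin_le_detMin_repaCost_inUpdate_self θ
        (hB ▸ detMin_le_min_zero_avg θ hxs (mem_filter.mp (T.mk_mem_XDet1 h.ys_mem h.xs_mem)).1)
    · simpa using detMin_sub_le_detMin_repaCost_inUpdate_of_ne θ huv le_rfl
        fun e _ he => hg e he (by simp [hxs_in])
  · have he : e ∈ T.In v := (T.mem_XDet.mp hxs).1 (hxs_in ▸ mem_singleton_self e)
    refine sum_le_sum_of_transfer (T.src_ne_of_mem_In he).symm _
      (h.detMin_add_le_detMin_repaCost_inUpdate_self hB hxs_in) ?_ fun u huv hue => ?_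
    · refine detMin_sub_le_detMin_repaCost_inUpdate_of_ne θ (T.src_ne_of_mem_In he)
        (le_max_left _ _) fun e' _ he' => ?_
      by_cases hee : e' = e
      · exact hee ▸ le_max_right _ _
      · exact (hg e' he' (by simp [hxs_in, hee])).trans (le_max_left _ _)
    · simpa using detMin_sub_le_detMin_repaCost_inUpdate_of_ne θ huv le_rfl
        fun e' he'u he' => hg e' he' fun he'x => by
          rw [hxs_in, mem_singleton] at he'x
          exact hue (he'x ▸ T.src_eq_of_mem_Out he'u).symm

end IsMinimizerPair

end Tracking

theorem backward_transition_update_monotone_general {Vdet Vconf : Type*} [Fintype Vdet]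
    [DecidableEq Vdet] [Fintype Vconf] [DecidableEq Vconf] (T : Tracking Vdet Vconf)
    (θ : Cost Vdet Vconf) (l : Repa Vdet Vconf) (v : Vdet)
    (xs ys : DetS Vdet)
    (hxs : xs ∈ T.XDet1 v)
    (hxs_min : ∀ s ∈ T.XDet1 v,
      detCost (T.repaCost θ l) v xs ≤ detCost (T.repaCost θ l) v s)
    (hys : ys ∈ T.XDet1 v) (hys_out : ys.2.2 ≠ xs.2.2)
    (hys_min : ∀ s ∈ T.XDet1 v, s.2.1 ≠ xs.2.1 → s.2.2 ≠ xs.2.2 →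
      detCost (T.repaCost θ l) v ys ≤ detCost (T.repaCost θ l) v s)
    (Bin : ℝ)
    (hBin : Bin = min 0 ((detCost (T.repaCost θ l) v xs
      + detCost (T.repaCost θ l) v (true, ys.2.1, xs.2.2)) / 2))
    (μ : Repa Vdet Vconf)
    (hμconf : μ.2.2 = 0)
    (hμmove : ∀ m : Vdet × Vdet, μ.1 m =
      if Sum.inl m ∈ T.In v then
        -T.minInOn (T.repaCost θ l) v (Sum.inl m) + Bin
      else 0)
    (hμdiv : ∀ d : Vdet × Vdet × Vdet, μ.2.1 d =
      ((if Sum.inr d ∈ T.In v ∧ d.2.1 = v then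
          -T.minInOn (T.repaCost θ l) v (Sum.inr d) + Bin
        else 0),
       (if Sum.inr d ∈ T.In v ∧ d.2.2 = v then
          -T.minInOn (T.repaCost θ l) v (Sum.inr d) + Bin
        else 0))) :
    ((true, ys.2.1, xs.2.2) : DetS Vdet) ∈ T.XDet v ∧ T.D θ l ≤ T.D θ (l + μ) := by
  set θ₀ := T.repaCost θ l
  have hpair : T.IsMinimizerPair θ₀ v xs ys := ⟨hxs, hxs_min, hys, hys_out, hys_min⟩
  refine ⟨(mem_filter.mp (T.mk_mem_XDet1 hys hxs)).1, ?_⟩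
  obtain rfl : μ = T.inUpdate v fun e => -T.minInOn θ₀ v e + Bin :=
    Prod.ext (funext hμmove) (Prod.ext (funext hμdiv) hμconf)
  exact T.D_le_D_add_of_sum_detMin_le θ rfl (hpair.sum_detMin_le hBin)

/-- The backward (incoming) transition dual update monotonically increases
the dual function: with `x*` a minimizer over `{x ∈ X_v : x_det = 1}`, `y*` a minimizer over
`{x ∈ X_v : x_det = 1, x_in ≠ x*_in, x_out ≠ x*_out}`,
`B_in = min{0, ½[⟨θ^λ_v, x*⟩ + ⟨θ^λ_v, (1, y*_in, x*_out)⟩]}` (the state `(1, y*_in, x*_out)`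
lies in `X_v`), and `μ` defined on the incoming edges of `v` as stated (all other components
zero), we have `D(λ) ≤ D(λ + μ)`. -/
theorem backward_transition_update_monotone {Vdet Vconf : Type*} [Fintype Vdet]
    [DecidableEq Vdet] [Fintype Vconf] [DecidableEq Vconf] (T : Tracking Vdet Vconf)
    (θ : Cost Vdet Vconf) (l : Repa Vdet Vconf) (v : Vdet)
    (hIn : (T.In v).Nonempty) (hOut : (T.Out v).Nonempty)
    (xs ys : DetS Vdet)
    (hxs : xs ∈ T.XDet1 v)
    (hxs_min : ∀ s ∈ T.XDet1 v,
      detCost (T.repaCost θ l) v xs ≤ detCost (T.repaCost θ l) v s)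
    (hys : ys ∈ T.XDet1 v) (hys_in : ys.2.1 ≠ xs.2.1) (hys_out : ys.2.2 ≠ xs.2.2)
    (hys_min : ∀ s ∈ T.XDet1 v, s.2.1 ≠ xs.2.1 → s.2.2 ≠ xs.2.2 →
      detCost (T.repaCost θ l) v ys ≤ detCost (T.repaCost θ l) v s)
    (Bin : ℝ)
    (hBin : Bin = min 0 ((detCost (T.repaCost θ l) v xs
      + detCost (T.repaCost θ l) v (true, ys.2.1, xs.2.2)) / 2))
    (μ : Repa Vdet Vconf)
    (hμconf : μ.2.2 = 0)
    (hμmove : ∀ m : Vdet × Vdet, μ.1 m =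
      if Sum.inl m ∈ T.In v then
        -T.minInOn (T.repaCost θ l) v (Sum.inl m) + Bin
      else 0)
    (hμdiv : ∀ d : Vdet × Vdet × Vdet, μ.2.1 d =
      ((if Sum.inr d ∈ T.In v ∧ d.2.1 = v then
          -T.minInOn (T.repaCost θ l) v (Sum.inr d) + Bin
        else 0),
       (if Sum.inr d ∈ T.In v ∧ d.2.2 = v then
          -T.minInOn (T.repaCost θ l) v (Sum.inr d) + Bin
        else 0))) :
    ((true, ys.2.1, xs.2.2) : DetS Vdet) ∈ T.XDet v ∧ T.D θ l ≤ T.D θ (l + μ) :=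
  backward_transition_update_monotone_general T θ l v xs ys hxs hxs_min hys hys_out hys_min Bin hBin
    μ hμconf hμmove hμdiv
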